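/- arXiv:2002.03731 — 3 statements merged into one kernel-verified Lean document; each statement's English description precedes it below -/
import Mathlib

section
/- Let X ∈ ℝ^{n×d}, X' ∈ ℝ^{n'×d'} be matrices, w ∈ ℝ^n, w' ∈ ℝ^{n'}, v ∈ ℝ^d, v' ∈ ℝ^{d'} probability vectors, and L : ℝ×ℝ → ℝ any cost function. Then the infimum defining COOT(X,X',w,w',v,v') is attained at a pair (π^s, π^v) such that π^s is an extreme point of the convex set Π(w,w') and π^v is an extreme point of the convex set Π(v,v'). -/
/-!
The cost is bilinear and jointly continuous in `(πs, πv)`, and both transport polytopes are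
nonempty compact convex sets, so a joint minimiser `(πs₀, πv₀)` exists. A continuous concave
function on a compact set attains its minimum at an extreme point: its set of minimisers is a
compact extreme subset, which has an extreme point by Krein–Milman. Minimising `cootCost · πv₀`
and then `cootCost πs ·` this way never increases the cost, so it ends at a pair of extreme
points that is still a joint minimiser.
-/

open Finset Matrix

/-- A probability vector: nonnegative entries summing to 1. -/
def IsProbVec {n : ℕ} (w : Fin n → ℝ) : Prop :=
  (∀ i, 0 ≤ w i) ∧ ∑ i, w i = 1

/-- The transport polytope `Π(w, w')`. -/
def TransportPolytope {n n' : ℕ} (w : Fin n → ℝ) (w' : Fin n' → ℝ) :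
    Set (Matrix (Fin n) (Fin n') ℝ) :=
  {π | (∀ i j, 0 ≤ π i j) ∧ (∀ i, ∑ j, π i j = w i) ∧ (∀ j, ∑ i, π i j = w' j)}

/-- The CO-Optimal Transport objective. -/
def cootCost {n d n' d' : ℕ} (L : ℝ → ℝ → ℝ)
    (X : Matrix (Fin n) (Fin d) ℝ) (X' : Matrix (Fin n') (Fin d') ℝ)
    (πs : Matrix (Fin n) (Fin n') ℝ) (πv : Matrix (Fin d) (Fin d') ℝ) : ℝ :=
  ∑ i, ∑ j, ∑ k, ∑ l, L (X i k) (X' j l) * πs i j * πv k l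

/-- The CO-Optimal Transport value. -/
noncomputable def COOT {n d n' d' : ℕ} (L : ℝ → ℝ → ℝ)
    (X : Matrix (Fin n) (Fin d) ℝ) (X' : Matrix (Fin n') (Fin d') ℝ)
    (w : Fin n → ℝ) (w' : Fin n' → ℝ) (v : Fin d → ℝ) (v' : Fin d' → ℝ) : ℝ :=
  sInf {r | ∃ πs ∈ TransportPolytope w w', ∃ πv ∈ TransportPolytope v v',
    r = cootCost L X X' πs πv}

open Set Function

section Extreme

variable {𝕜 E β : Type*} [Semiring 𝕜] [PartialOrder 𝕜] [AddCommMonoid E] [SMul 𝕜 E]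
  [AddCommMonoid β] [LinearOrder β] [IsOrderedCancelAddMonoid β] [Module 𝕜 β]
  [PosSMulStrictMono 𝕜 β] {s : Set E} {f : E → β} {a : E}

theorem ConcaveOn.isExtreme_inter_preimage_Iic (hf : ConcaveOn 𝕜 s f) (ha : IsMinOn f s a) :
    IsExtreme 𝕜 s (s ∩ f ⁻¹' Iic (f a)) := by
  refine ⟨inter_subset_left, fun x hx y hy z ⟨_, hza⟩ hz => ⟨hx, ?_⟩⟩
  exact (hf.left_le_of_le_right hx hy hz (le_trans hza (ha hy))).trans hza

end Extreme

section KreinMilman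

variable {E F : Type*}
  [AddCommGroup E] [Module ℝ E] [TopologicalSpace E] [T2Space E]
  [IsTopologicalAddGroup E] [ContinuousSMul ℝ E] [LocallyConvexSpace ℝ E]
  [AddCommGroup F] [Module ℝ F] [TopologicalSpace F] [T2Space F]
  [IsTopologicalAddGroup F] [ContinuousSMul ℝ F] [LocallyConvexSpace ℝ F]

theorem IsCompact.exists_mem_extremePoints_isMinOn {s : Set E} {f : E → ℝ} (hs : IsCompact s)
    (hne : s.Nonempty) (hf : ConcaveOn ℝ s f) (hfc : ContinuousOn f s) :
    ∃ x ∈ s.extremePoints ℝ, IsMinOn f s x := by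
  obtain ⟨x₀, hx₀, hmin⟩ := hs.exists_isMinOn hne hfc
  have hB : IsCompact (s ∩ f ⁻¹' Iic (f x₀)) :=
    hs.of_isClosed_subset (hfc.preimage_isClosed_of_isClosed hs.isClosed isClosed_Iic)
      inter_subset_left
  obtain ⟨x, hx⟩ := hB.extremePoints_nonempty ⟨x₀, hx₀, le_refl (f x₀)⟩
  refine ⟨x, (hf.isExtreme_inter_preimage_Iic hmin).extremePoints_subset_extremePoints hx,
    fun y hy => ?_⟩
  exact (extremePoints_subset hx).2.trans (isMinOn_iff.1 hmin y hy)

theorem IsCompact.exists_mem_extremePoints_isMinOn_prod {S : Set E} {T : Set F}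
    {f : E → F → ℝ} (hS : IsCompact S) (hT : IsCompact T) (hSne : S.Nonempty)
    (hTne : T.Nonempty) (hf : Continuous (uncurry f))
    (hfS : ∀ y ∈ T, ConcaveOn ℝ S (f · y)) (hfT : ∀ x ∈ S, ConcaveOn ℝ T (f x)) :
    ∃ x ∈ S.extremePoints ℝ, ∃ y ∈ T.extremePoints ℝ, IsMinOn (uncurry f) (S ×ˢ T) (x, y) := by
  obtain ⟨⟨x₀, y₀⟩, ⟨hx₀, hy₀⟩, hmin⟩ :=
    (hS.prod hT).exists_isMinOn (hSne.prod hTne) hf.continuousOn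
  obtain ⟨x, hxS, hx⟩ :=
    hS.exists_mem_extremePoints_isMinOn hSne (hfS y₀ hy₀) (hf.uncurry_right y₀).continuousOn
  obtain ⟨y, hyT, hy⟩ := hT.exists_mem_extremePoints_isMinOn hTne
    (hfT x (extremePoints_subset hxS)) (hf.uncurry_left x).continuousOn
  refine ⟨x, hxS, y, hyT, fun p hp => ?_⟩
  calc f x y ≤ f x y₀ := hy hy₀
    _ ≤ f x₀ y₀ := hx hx₀
    _ ≤ uncurry f p := hmin hp

end KreinMilman

instance Matrix.instLocallyConvexSpace {m n : Type*} :
    LocallyConvexSpace ℝ (Matrix m n ℝ) :=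
  inferInstanceAs (LocallyConvexSpace ℝ (m → n → ℝ))

section TransportPolytope

variable {n n' : ℕ}

theorem convex_transportPolytope (w : Fin n → ℝ) (w' : Fin n' → ℝ) :
    Convex ℝ (TransportPolytope w w') := by
  rintro x ⟨hx₀, hxr, hxc⟩ y ⟨hy₀, hyr, hyc⟩ a b ha hb hab
  refine ⟨fun i j => ?_, fun i => ?_, fun j => ?_⟩
  · exact add_nonneg (mul_nonneg ha (hx₀ i j)) (mul_nonneg hb (hy₀ i j))
  · simp [sum_add_distrib, ← mul_sum, hxr, hyr, ← add_mul, hab]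
  · simp [sum_add_distrib, ← mul_sum, hxc, hyc, ← add_mul, hab]

theorem isCompact_transportPolytope (w : Fin n → ℝ) (w' : Fin n' → ℝ) :
    IsCompact (TransportPolytope w w') := by
  have hbox : IsCompact (univ.pi fun i => univ.pi fun _ => Icc 0 (w i) :
      Set (Matrix (Fin n) (Fin n') ℝ)) :=
    isCompact_univ_pi fun _ => isCompact_univ_pi fun _ => isCompact_Icc
  refine hbox.of_isClosed_subset ?_ fun x ⟨hx₀, hxr, _⟩ => ?_
  · simp only [TransportPolytope, ofPred_and, ofPred_forall]
    exact (isClosed_iInter fun _ => isClosed_iInter fun _ =>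
      isClosed_le continuous_const (by fun_prop)).inter
        ((isClosed_iInter fun _ => isClosed_eq (by fun_prop) continuous_const).inter
          (isClosed_iInter fun _ => isClosed_eq (by fun_prop) continuous_const))
  · simp only [mem_univ_pi, Set.mem_Icc]
    exact fun i j => ⟨hx₀ i j, hxr i ▸ single_le_sum (fun j _ => hx₀ i j) (mem_univ j)⟩

theorem transportPolytope_nonempty {w : Fin n → ℝ} {w' : Fin n' → ℝ} (hw : IsProbVec w)
    (hw' : IsProbVec w') : (TransportPolytope w w').Nonempty := by
  refine ⟨of fun i j => w i * w' j, fun i j => mul_nonneg (hw.1 i) (hw'.1 j), fun i => ?_,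
    fun j => ?_⟩
  · simp [← mul_sum, hw'.2]
  · simp [← sum_mul, hw.2]

end TransportPolytope

section Coot

variable {n d n' d' : ℕ} (L : ℝ → ℝ → ℝ)
  (X : Matrix (Fin n) (Fin d) ℝ) (X' : Matrix (Fin n') (Fin d') ℝ)

noncomputable def cootCostBilin :
    Matrix (Fin n) (Fin n') ℝ →ₗ[ℝ] Matrix (Fin d) (Fin d') ℝ →ₗ[ℝ] ℝ :=
  LinearMap.mk₂ ℝ (cootCost L X X')
    (fun _ _ _ => by simp only [cootCost, Matrix.add_apply, mul_add, add_mul, sum_add_distrib])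
    (fun _ _ _ => by
      simp only [cootCost, Matrix.smul_apply, smul_eq_mul, mul_sum, mul_assoc, mul_left_comm])
    (fun _ _ _ => by simp only [cootCost, Matrix.add_apply, mul_add, sum_add_distrib])
    (fun _ _ _ => by
      simp only [cootCost, Matrix.smul_apply, smul_eq_mul, mul_sum, mul_assoc, mul_left_comm])

theorem continuous_cootCost : Continuous (uncurry (cootCost L X X')) := by
  unfold cootCost; fun_prop

variable {L X X'} {w : Fin n → ℝ} {w' : Fin n' → ℝ} {v : Fin d → ℝ} {v' : Fin d' → ℝ}
  {πs : Matrix (Fin n) (Fin n') ℝ} {πv : Matrix (Fin d) (Fin d') ℝ}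

theorem COOT_eq_cootCost_of_isMinOn (hπs : πs ∈ TransportPolytope w w')
    (hπv : πv ∈ TransportPolytope v v')
    (hmin : IsMinOn (uncurry (cootCost L X X'))
      (TransportPolytope w w' ×ˢ TransportPolytope v v') (πs, πv)) :
    COOT L X X' w w' v v' = cootCost L X X' πs πv := by
  refine IsLeast.csInf_eq ⟨⟨πs, hπs, πv, hπv, rfl⟩, ?_⟩
  rintro _ ⟨πs', hπs', πv', hπv', rfl⟩
  exact isMinOn_iff.1 hmin (πs', πv') ⟨hπs', hπv'⟩

end Coot

theorem coot_attained_at_extreme_points {n d n' d' : ℕ}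
    (X : Matrix (Fin n) (Fin d) ℝ) (X' : Matrix (Fin n') (Fin d') ℝ)
    (w : Fin n → ℝ) (w' : Fin n' → ℝ) (v : Fin d → ℝ) (v' : Fin d' → ℝ)
    (hw : IsProbVec w) (hw' : IsProbVec w') (hv : IsProbVec v) (hv' : IsProbVec v')
    (L : ℝ → ℝ → ℝ) :
    ∃ πs ∈ Set.extremePoints ℝ (TransportPolytope w w'),
      ∃ πv ∈ Set.extremePoints ℝ (TransportPolytope v v'),
        cootCost L X X' πs πv = COOT L X X' w w' v v' := by
  obtain ⟨πs, hπs, πv, hπv, hmin⟩ :=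
    (isCompact_transportPolytope w w').exists_mem_extremePoints_isMinOn_prod
      (isCompact_transportPolytope v v') (transportPolytope_nonempty hw hw')
      (transportPolytope_nonempty hv hv') (continuous_cootCost L X X')
      (fun πv _ => ((cootCostBilin L X X').flip πv).concaveOn (convex_transportPolytope w w'))
      (fun πs _ => (cootCostBilin L X X' πs).concaveOn (convex_transportPolytope v v'))
  exact ⟨πs, hπs, πv, hπv,
    (COOT_eq_cootCost_of_isMinOn (extremePoints_subset hπs) (extremePoints_subset hπv) hmin).symm⟩
end

section
/- Let X ∈ ℝ^{n×p} and X' ∈ ℝ^{n'×p'} be matrices, let C ∈ ℝ^{n×n} be the squared Euclidean distance matrix of X and C' ∈ ℝ^{n'×n'} the squared Euclidean distance matrix of X', let L(a,b) = (a−b)², and let w ∈ ℝ^n, w' ∈ ℝ^{n'} be probability vectors. If π* ∈ Π(w,w') attains the infimum defining GW(C,C',w,w'), then the pair (π*, π*) attains the infimum defining COOT(C, C', w, w', w, w'). -/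
open Finset Matrix

/-- The Gromov–Wasserstein objective. -/
def gwCost {n n' : ℕ} (L : ℝ → ℝ → ℝ)
    (C : Matrix (Fin n) (Fin n) ℝ) (C' : Matrix (Fin n') (Fin n') ℝ)
    (π : Matrix (Fin n) (Fin n') ℝ) : ℝ :=
  ∑ i, ∑ j, ∑ k, ∑ l, L (C i k) (C' j l) * π i j * π k l

/-- The Gromov–Wasserstein value. -/
noncomputable def GW {n n' : ℕ} (L : ℝ → ℝ → ℝ)
    (C : Matrix (Fin n) (Fin n) ℝ) (C' : Matrix (Fin n') (Fin n') ℝ)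
    (w : Fin n → ℝ) (w' : Fin n' → ℝ) : ℝ :=
  sInf {r | ∃ π ∈ TransportPolytope w w', r = gwCost L C C' π}


section AuxSums
variable {α β γ δ : Type*} [Fintype α] [Fintype β] [Fintype γ] [Fintype δ]
lemma myProdSplit (f : α → ℝ) (g : β → ℝ) :
    ∑ a, ∑ b, f a * g b = (∑ a, f a) * (∑ b, g b) :=
  (Finset.sum_mul_sum _ _ _ _).symm
lemma myRot3 (f : α → β → γ → ℝ) :
    ∑ a, ∑ b, ∑ c, f a b c = ∑ b, ∑ c, ∑ a, f a b c := by
  rw [Finset.sum_comm]; exact Finset.sum_congr rfl fun b _ => Finset.sum_comm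
lemma myComm3 (f : α → β → γ → ℝ) :
    ∑ a, ∑ b, ∑ c, f a b c = ∑ c, ∑ a, ∑ b, f a b c :=
  (myRot3 (fun c a b => f a b c)).symm
lemma mySwap23 (f : α → β → γ → δ → ℝ) :
    ∑ a, ∑ b, ∑ c, ∑ d, f a b c d = ∑ a, ∑ c, ∑ b, ∑ d, f a b c d :=
  Finset.sum_congr rfl fun _ _ => Finset.sum_comm
lemma myReorderA (f : α → β → γ → δ → ℝ) :
    ∑ a, ∑ b, ∑ c, ∑ d, f a b c d = ∑ b, ∑ c, ∑ d, ∑ a, f a b c d := by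
  rw [Finset.sum_comm]; exact Finset.sum_congr rfl fun b _ => myRot3 _
lemma myReorderB (f : α → β → γ → δ → ℝ) :
    ∑ a, ∑ b, ∑ c, ∑ d, f a b c d = ∑ a, ∑ c, ∑ d, ∑ b, f a b c d :=
  Finset.sum_congr rfl fun a _ => myRot3 _
lemma myReorderC (f : α → β → γ → δ → ℝ) :
    ∑ a, ∑ b, ∑ c, ∑ d, f a b c d = ∑ a, ∑ b, ∑ d, ∑ c, f a b c d :=
  Finset.sum_congr rfl fun a _ => Finset.sum_congr rfl fun b _ => Finset.sum_comm
lemma myReorderCD (f : α → β → γ → δ → ℝ) :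
    ∑ a, ∑ b, ∑ c, ∑ d, f a b c d = ∑ c, ∑ d, ∑ a, ∑ b, f a b c d := by
  rw [mySwap23, Finset.sum_comm]; exact Finset.sum_congr rfl fun c _ => myComm3 _
lemma myInnerVanish {ι : Type*} [Fintype ι] (m z : ι → ℝ) (K : ℝ)
    (hm : ∀ v, m v = z v * K) (hz : ∑ v, z v = 0) : ∑ v, m v = 0 := by
  rw [Finset.sum_congr rfl fun v _ => hm v, ← Finset.sum_mul, hz, zero_mul]
lemma myInnerSplit {τ : Type*} [Fintype τ] (Y : β → τ → ℝ) (r s : β → ℝ) :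
    ∑ b, ∑ d, (∑ t, Y b t * Y d t) * (r b * s d)
      = ∑ t, (∑ b, Y b t * r b) * (∑ d, Y d t * s d) := by
  calc ∑ b, ∑ d, (∑ t, Y b t * Y d t) * (r b * s d)
      = ∑ b, ∑ d, ∑ t, (Y b t * r b) * (Y d t * s d) := by
        refine Finset.sum_congr rfl fun b _ => Finset.sum_congr rfl fun d _ => ?_
        rw [Finset.sum_mul]
        exact Finset.sum_congr rfl fun t _ => by ring
    _ = ∑ t, ∑ b, ∑ d, (Y b t * r b) * (Y d t * s d) := myComm3 _
    _ = ∑ t, (∑ b, Y b t * r b) * (∑ d, Y d t * s d) :=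
        Finset.sum_congr rfl fun t _ => myProdSplit _ _
lemma myGram {σ τ : Type*} [Fintype σ] [Fintype τ] (U : α → σ → ℝ) (V : α → τ → ℝ) :
    ∑ a, ∑ c, (∑ s, U a s * U c s) * (∑ t, V a t * V c t)
      = ∑ s, ∑ t, (∑ a, U a s * V a t) * (∑ c, U c s * V c t) := by
  calc ∑ a, ∑ c, (∑ s, U a s * U c s) * (∑ t, V a t * V c t)
      = ∑ a, ∑ c, ∑ s, ∑ t, (U a s * V a t) * (U c s * V c t) := by
        refine Finset.sum_congr rfl fun a _ => Finset.sum_congr rfl fun c _ => ?_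
        rw [Finset.sum_mul_sum]
        exact Finset.sum_congr rfl fun s _ => Finset.sum_congr rfl fun t _ => by ring
    _ = ∑ s, ∑ t, ∑ a, ∑ c, (U a s * V a t) * (U c s * V c t) := myReorderCD _
    _ = ∑ s, ∑ t, (∑ a, U a s * V a t) * (∑ c, U c s * V c t) :=
        Finset.sum_congr rfl fun s _ => Finset.sum_congr rfl fun t _ => myProdSplit _ _
lemma myMulSum4 (x : ℝ) (f : α → β → γ → δ → ℝ) :
    ∑ a, ∑ b, ∑ c, ∑ d, x * f a b c d = x * ∑ a, ∑ b, ∑ c, ∑ d, f a b c d := by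
  simp only [Finset.mul_sum]
end AuxSums

set_option maxHeartbeats 2000000 in
lemma myQuadNonpos {n p n' p' : ℕ}
    (X : Matrix (Fin n) (Fin p) ℝ) (X' : Matrix (Fin n') (Fin p') ℝ)
    (C : Matrix (Fin n) (Fin n) ℝ) (C' : Matrix (Fin n') (Fin n') ℝ)
    (hC : ∀ i k, C i k = ∑ s, (X i s - X k s) ^ 2)
    (hC' : ∀ j l, C' j l = ∑ s, (X' j s - X' l s) ^ 2)
    (D : Matrix (Fin n) (Fin n') ℝ)
    (hDr : ∀ i, ∑ j, D i j = 0) (hDc : ∀ j, ∑ i, D i j = 0) :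
    ∑ i, ∑ j, ∑ k, ∑ l, (C i k - C' j l) ^ 2 * D i j * D k l ≤ 0 := by
  have hCe : ∀ i k, C i k
      = (∑ s, X i s ^ 2) + (∑ s, X k s ^ 2) - 2 * ∑ s, X i s * X k s := by
    intro i k
    rw [hC i k,
      show (∑ s, (X i s - X k s) ^ 2)
        = ∑ s, (X i s ^ 2 + X k s ^ 2 - 2 * (X i s * X k s)) from
        Finset.sum_congr rfl fun s _ => by ring]
    rw [Finset.sum_sub_distrib, Finset.sum_add_distrib, ← Finset.mul_sum]
  have hC'e : ∀ j l, C' j l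
      = (∑ t, X' j t ^ 2) + (∑ t, X' l t ^ 2) - 2 * ∑ t, X' j t * X' l t := by
    intro j l
    rw [hC' j l,
      show (∑ t, (X' j t - X' l t) ^ 2)
        = ∑ t, (X' j t ^ 2 + X' l t ^ 2 - 2 * (X' j t * X' l t)) from
        Finset.sum_congr rfl fun t _ => by ring]
    rw [Finset.sum_sub_distrib, Finset.sum_add_distrib, ← Finset.mul_sum]
  have hpoint : ∀ i j k l, (C i k - C' j l) ^ 2 * D i j * D k l
      = ((∑ s, X i s ^ 2) + (∑ s, X k s ^ 2) - 2 * ∑ s, X i s * X k s) ^ 2 * D i j * D k l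
      + ((∑ t, X' j t ^ 2) + (∑ t, X' l t ^ 2) - 2 * ∑ t, X' j t * X' l t) ^ 2 * D i j * D k l
      + (-2) * ((∑ s, X i s ^ 2) * (∑ t, X' j t ^ 2)) * D i j * D k l
      + (-2) * ((∑ s, X i s ^ 2) * (∑ t, X' l t ^ 2)) * D i j * D k l
      + (-2) * ((∑ s, X k s ^ 2) * (∑ t, X' j t ^ 2)) * D i j * D k l
      + (-2) * ((∑ s, X k s ^ 2) * (∑ t, X' l t ^ 2)) * D i j * D k l
      + 4 * ((∑ s, X i s * X k s) * (∑ t, X' j t ^ 2)) * D i j * D k l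
      + 4 * ((∑ s, X i s * X k s) * (∑ t, X' l t ^ 2)) * D i j * D k l
      + 4 * ((∑ s, X i s ^ 2) * (∑ t, X' j t * X' l t)) * D i j * D k l
      + 4 * ((∑ s, X k s ^ 2) * (∑ t, X' j t * X' l t)) * D i j * D k l
      + (-8) * ((∑ s, X i s * X k s) * ((∑ t, X' j t * X' l t) * (D i j * D k l))) := by
    intro i j k l
    rw [hCe i k, hC'e j l]
    ring

  have H : ∑ i, ∑ j, ∑ k, ∑ l, (C i k - C' j l) ^ 2 * D i j * D k l
      = (∑ i, ∑ j, ∑ k, ∑ l, ((∑ s, X i s ^ 2) + (∑ s, X k s ^ 2) - 2 * ∑ s, X i s * X k s) ^ 2 * D i j * D k l)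
      + (∑ i, ∑ j, ∑ k, ∑ l, ((∑ t, X' j t ^ 2) + (∑ t, X' l t ^ 2) - 2 * ∑ t, X' j t * X' l t) ^ 2 * D i j * D k l)
      + (∑ i, ∑ j, ∑ k, ∑ l, (-2) * ((∑ s, X i s ^ 2) * (∑ t, X' j t ^ 2)) * D i j * D k l)
      + (∑ i, ∑ j, ∑ k, ∑ l, (-2) * ((∑ s, X i s ^ 2) * (∑ t, X' l t ^ 2)) * D i j * D k l)
      + (∑ i, ∑ j, ∑ k, ∑ l, (-2) * ((∑ s, X k s ^ 2) * (∑ t, X' j t ^ 2)) * D i j * D k l)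
      + (∑ i, ∑ j, ∑ k, ∑ l, (-2) * ((∑ s, X k s ^ 2) * (∑ t, X' l t ^ 2)) * D i j * D k l)
      + (∑ i, ∑ j, ∑ k, ∑ l, 4 * ((∑ s, X i s * X k s) * (∑ t, X' j t ^ 2)) * D i j * D k l)
      + (∑ i, ∑ j, ∑ k, ∑ l, 4 * ((∑ s, X i s * X k s) * (∑ t, X' l t ^ 2)) * D i j * D k l)
      + (∑ i, ∑ j, ∑ k, ∑ l, 4 * ((∑ s, X i s ^ 2) * (∑ t, X' j t * X' l t)) * D i j * D k l)
      + (∑ i, ∑ j, ∑ k, ∑ l, 4 * ((∑ s, X k s ^ 2) * (∑ t, X' j t * X' l t)) * D i j * D k l)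
      + (∑ i, ∑ j, ∑ k, ∑ l, (-8) * ((∑ s, X i s * X k s) * ((∑ t, X' j t * X' l t) * (D i j * D k l)))) := by
    simp only [hpoint, Finset.sum_add_distrib]
  -- term 1 : vanish over l
  have h1 : (∑ i, ∑ j, ∑ k, ∑ l, ((∑ s, X i s ^ 2) + (∑ s, X k s ^ 2) - 2 * ∑ s, X i s * X k s) ^ 2 * D i j * D k l) = 0 := by
    refine Finset.sum_eq_zero fun i _ => Finset.sum_eq_zero fun j _ => Finset.sum_eq_zero fun k _ => ?_
    exact myInnerVanish _ (fun l => D k l) (((∑ s, X i s ^ 2) + (∑ s, X k s ^ 2) - 2 * ∑ s, X i s * X k s) ^ 2 * D i j) (fun l => by ring) (hDr k)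
  have h3 : (∑ i, ∑ j, ∑ k, ∑ l, (-2) * ((∑ s, X i s ^ 2) * (∑ t, X' j t ^ 2)) * D i j * D k l) = 0 := by
    refine Finset.sum_eq_zero fun i _ => Finset.sum_eq_zero fun j _ => Finset.sum_eq_zero fun k _ => ?_
    exact myInnerVanish _ (fun l => D k l) ((-2) * ((∑ s, X i s ^ 2) * (∑ t, X' j t ^ 2)) * D i j) (fun l => by ring) (hDr k)
  have h5 : (∑ i, ∑ j, ∑ k, ∑ l, (-2) * ((∑ s, X k s ^ 2) * (∑ t, X' j t ^ 2)) * D i j * D k l) = 0 := by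
    refine Finset.sum_eq_zero fun i _ => Finset.sum_eq_zero fun j _ => Finset.sum_eq_zero fun k _ => ?_
    exact myInnerVanish _ (fun l => D k l) ((-2) * ((∑ s, X k s ^ 2) * (∑ t, X' j t ^ 2)) * D i j) (fun l => by ring) (hDr k)
  have h7 : (∑ i, ∑ j, ∑ k, ∑ l, 4 * ((∑ s, X i s * X k s) * (∑ t, X' j t ^ 2)) * D i j * D k l) = 0 := by
    refine Finset.sum_eq_zero fun i _ => Finset.sum_eq_zero fun j _ => Finset.sum_eq_zero fun k _ => ?_
    exact myInnerVanish _ (fun l => D k l) (4 * ((∑ s, X i s * X k s) * (∑ t, X' j t ^ 2)) * D i j) (fun l => by ring) (hDr k)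
  -- term 2 : vanish over i
  have h2 : (∑ i, ∑ j, ∑ k, ∑ l, ((∑ t, X' j t ^ 2) + (∑ t, X' l t ^ 2) - 2 * ∑ t, X' j t * X' l t) ^ 2 * D i j * D k l) = 0 := by
    rw [myReorderA]
    refine Finset.sum_eq_zero fun j _ => Finset.sum_eq_zero fun k _ => Finset.sum_eq_zero fun l _ => ?_
    exact myInnerVanish _ (fun i => D i j) (((∑ t, X' j t ^ 2) + (∑ t, X' l t ^ 2) - 2 * ∑ t, X' j t * X' l t) ^ 2 * D k l) (fun i => by ring) (hDc j)
  have h10 : (∑ i, ∑ j, ∑ k, ∑ l, 4 * ((∑ s, X k s ^ 2) * (∑ t, X' j t * X' l t)) * D i j * D k l) = 0 := by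
    rw [myReorderA]
    refine Finset.sum_eq_zero fun j _ => Finset.sum_eq_zero fun k _ => Finset.sum_eq_zero fun l _ => ?_
    exact myInnerVanish _ (fun i => D i j) (4 * ((∑ s, X k s ^ 2) * (∑ t, X' j t * X' l t)) * D k l) (fun i => by ring) (hDc j)
  -- vanish over j
  have h4 : (∑ i, ∑ j, ∑ k, ∑ l, (-2) * ((∑ s, X i s ^ 2) * (∑ t, X' l t ^ 2)) * D i j * D k l) = 0 := by
    rw [myReorderB]
    refine Finset.sum_eq_zero fun i _ => Finset.sum_eq_zero fun k _ => Finset.sum_eq_zero fun l _ => ?_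
    exact myInnerVanish _ (fun j => D i j) ((-2) * ((∑ s, X i s ^ 2) * (∑ t, X' l t ^ 2)) * D k l) (fun j => by ring) (hDr i)
  have h6 : (∑ i, ∑ j, ∑ k, ∑ l, (-2) * ((∑ s, X k s ^ 2) * (∑ t, X' l t ^ 2)) * D i j * D k l) = 0 := by
    rw [myReorderB]
    refine Finset.sum_eq_zero fun i _ => Finset.sum_eq_zero fun k _ => Finset.sum_eq_zero fun l _ => ?_
    exact myInnerVanish _ (fun j => D i j) ((-2) * ((∑ s, X k s ^ 2) * (∑ t, X' l t ^ 2)) * D k l) (fun j => by ring) (hDr i)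
  have h8 : (∑ i, ∑ j, ∑ k, ∑ l, 4 * ((∑ s, X i s * X k s) * (∑ t, X' l t ^ 2)) * D i j * D k l) = 0 := by
    rw [myReorderB]
    refine Finset.sum_eq_zero fun i _ => Finset.sum_eq_zero fun k _ => Finset.sum_eq_zero fun l _ => ?_
    exact myInnerVanish _ (fun j => D i j) (4 * ((∑ s, X i s * X k s) * (∑ t, X' l t ^ 2)) * D k l) (fun j => by ring) (hDr i)
  -- vanish over k
  have h9 : (∑ i, ∑ j, ∑ k, ∑ l, 4 * ((∑ s, X i s ^ 2) * (∑ t, X' j t * X' l t)) * D i j * D k l) = 0 := by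
    rw [myReorderC]
    refine Finset.sum_eq_zero fun i _ => Finset.sum_eq_zero fun j _ => Finset.sum_eq_zero fun l _ => ?_
    exact myInnerVanish _ (fun k => D k l) (4 * ((∑ s, X i s ^ 2) * (∑ t, X' j t * X' l t)) * D i j) (fun k => by ring) (hDc l)
  -- term 11
  have h11 : (∑ i, ∑ j, ∑ k, ∑ l, (-8) * ((∑ s, X i s * X k s) * ((∑ t, X' j t * X' l t) * (D i j * D k l))))
      = (-8) * ∑ s, ∑ t, (∑ i, ∑ j, X i s * X' j t * D i j) * (∑ i, ∑ j, X i s * X' j t * D i j) := by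
    have hQ : (∑ i, ∑ j, ∑ k, ∑ l, (∑ s, X i s * X k s) * ((∑ t, X' j t * X' l t) * (D i j * D k l)))
        = ∑ s, ∑ t, (∑ i, ∑ j, X i s * X' j t * D i j) * (∑ i, ∑ j, X i s * X' j t * D i j) := by
        calc ∑ i, ∑ j, ∑ k, ∑ l, (∑ s, X i s * X k s) * ((∑ t, X' j t * X' l t) * (D i j * D k l))
          = ∑ i, ∑ k, ∑ j, ∑ l, (∑ s, X i s * X k s) * ((∑ t, X' j t * X' l t) * (D i j * D k l)) := mySwap23 _
        _ = ∑ i, ∑ k, (∑ s, X i s * X k s) * (∑ t, (∑ j, X' j t * D i j) * (∑ l, X' l t * D k l)) := by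
            refine Finset.sum_congr rfl fun i _ => Finset.sum_congr rfl fun k _ => ?_
            rw [← myInnerSplit X' (fun j => D i j) (fun l => D k l), Finset.mul_sum]
            exact Finset.sum_congr rfl fun j _ => by rw [Finset.mul_sum]
        _ = ∑ s, ∑ t, (∑ i, X i s * (∑ j, X' j t * D i j)) * (∑ k, X k s * (∑ l, X' l t * D k l)) :=
            myGram X (fun i t => ∑ j, X' j t * D i j)
        _ = ∑ s, ∑ t, (∑ i, ∑ j, X i s * X' j t * D i j) * (∑ i, ∑ j, X i s * X' j t * D i j) := by
            refine Finset.sum_congr rfl fun s _ => Finset.sum_congr rfl fun t _ => ?_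
            have : (∑ i, X i s * (∑ j, X' j t * D i j)) = ∑ i, ∑ j, X i s * X' j t * D i j := by
              refine Finset.sum_congr rfl fun i _ => ?_
              rw [Finset.mul_sum]
              exact Finset.sum_congr rfl fun j _ => by ring
            rw [this]
    exact (myMulSum4 (-8) fun i j k l =>
      (∑ s, X i s * X k s) * ((∑ t, X' j t * X' l t) * (D i j * D k l))).trans
      (congrArg (fun z => (-8:ℝ) * z) hQ)
  have hnn : 0 ≤ ∑ s, ∑ t, (∑ i, ∑ j, X i s * X' j t * D i j) * (∑ i, ∑ j, X i s * X' j t * D i j) :=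
    Finset.sum_nonneg fun s _ => Finset.sum_nonneg fun t _ => mul_self_nonneg _
  linarith [H, h1, h2, h3, h4, h5, h6, h7, h8, h9, h10, h11, hnn]

lemma myCootSwap {n p n' p' : ℕ}
    (X : Matrix (Fin n) (Fin p) ℝ) (X' : Matrix (Fin n') (Fin p') ℝ)
    (C : Matrix (Fin n) (Fin n) ℝ) (C' : Matrix (Fin n') (Fin n') ℝ)
    (hC : ∀ i k, C i k = ∑ s, (X i s - X k s) ^ 2)
    (hC' : ∀ j l, C' j l = ∑ s, (X' j s - X' l s) ^ 2)
    (A B : Matrix (Fin n) (Fin n') ℝ) :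
    (∑ i, ∑ j, ∑ k, ∑ l, (C i k - C' j l) ^ 2 * B i j * A k l)
      = ∑ i, ∑ j, ∑ k, ∑ l, (C i k - C' j l) ^ 2 * A i j * B k l := by
  have Csym : ∀ i k, C i k = C k i := fun i k => by
    rw [hC i k, hC k i]; exact Finset.sum_congr rfl fun s _ => by ring
  have C'sym : ∀ j l, C' j l = C' l j := fun j l => by
    rw [hC' j l, hC' l j]; exact Finset.sum_congr rfl fun s _ => by ring
  rw [myReorderCD]
  refine Finset.sum_congr rfl fun a _ => Finset.sum_congr rfl fun b _ =>
    Finset.sum_congr rfl fun c _ => Finset.sum_congr rfl fun d _ => ?_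
  rw [show C c a = C a c from Csym c a, show C' d b = C' b d from C'sym d b]
  ring

lemma myKeyIneq {n p n' p' : ℕ}
    (X : Matrix (Fin n) (Fin p) ℝ) (X' : Matrix (Fin n') (Fin p') ℝ)
    (C : Matrix (Fin n) (Fin n) ℝ) (C' : Matrix (Fin n') (Fin n') ℝ)
    (hC : ∀ i k, C i k = ∑ s, (X i s - X k s) ^ 2)
    (hC' : ∀ j l, C' j l = ∑ s, (X' j s - X' l s) ^ 2)
    (w : Fin n → ℝ) (w' : Fin n' → ℝ)
    (A B : Matrix (Fin n) (Fin n') ℝ)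
    (hA : A ∈ TransportPolytope w w') (hB : B ∈ TransportPolytope w w') :
    gwCost (fun a b => (a - b) ^ 2) C C' A + gwCost (fun a b => (a - b) ^ 2) C C' B
      ≤ 2 * cootCost (fun a b => (a - b) ^ 2) C C' A B := by
  have hDr : ∀ i, ∑ j, (A i j - B i j) = 0 := by
    intro i; rw [Finset.sum_sub_distrib, hA.2.1 i, hB.2.1 i, sub_self]
  have hDc : ∀ j, ∑ i, (A i j - B i j) = 0 := by
    intro j; rw [Finset.sum_sub_distrib, hA.2.2 j, hB.2.2 j, sub_self]
  have hquad := myQuadNonpos X X' C C' hC hC'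
    (fun i j => A i j - B i j) hDr hDc
  have hexp : (∑ i, ∑ j, ∑ k, ∑ l,
        (C i k - C' j l) ^ 2 * ((fun i j => A i j - B i j) i j)
          * ((fun i j => A i j - B i j) k l))
      = ((∑ i, ∑ j, ∑ k, ∑ l, (C i k - C' j l) ^ 2 * A i j * A k l)
        + (∑ i, ∑ j, ∑ k, ∑ l, (C i k - C' j l) ^ 2 * B i j * B k l)
        - (∑ i, ∑ j, ∑ k, ∑ l, (C i k - C' j l) ^ 2 * A i j * B k l))
        - (∑ i, ∑ j, ∑ k, ∑ l, (C i k - C' j l) ^ 2 * B i j * A k l) := by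
    rw [show (∑ i, ∑ j, ∑ k, ∑ l,
        (C i k - C' j l) ^ 2 * ((fun i j => A i j - B i j) i j)
          * ((fun i j => A i j - B i j) k l))
      = ∑ i, ∑ j, ∑ k, ∑ l,
        (((C i k - C' j l) ^ 2 * A i j * A k l
          + (C i k - C' j l) ^ 2 * B i j * B k l
          - (C i k - C' j l) ^ 2 * A i j * B k l)
          - (C i k - C' j l) ^ 2 * B i j * A k l) from
      Finset.sum_congr rfl fun i _ => Finset.sum_congr rfl fun j _ =>
        Finset.sum_congr rfl fun k _ => Finset.sum_congr rfl fun l _ => by ring]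
    simp only [Finset.sum_add_distrib, Finset.sum_sub_distrib]
  have hswap := myCootSwap X X' C C' hC hC' A B
  show (∑ i, ∑ j, ∑ k, ∑ l, (C i k - C' j l) ^ 2 * A i j * A k l)
      + (∑ i, ∑ j, ∑ k, ∑ l, (C i k - C' j l) ^ 2 * B i j * B k l)
      ≤ 2 * ∑ i, ∑ j, ∑ k, ∑ l, (C i k - C' j l) ^ 2 * A i j * B k l
  linarith [hquad, hexp, hswap]

theorem gw_optimal_gives_coot_optimal {n p n' p' : ℕ}
    (X : Matrix (Fin n) (Fin p) ℝ) (X' : Matrix (Fin n') (Fin p') ℝ)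
    (C : Matrix (Fin n) (Fin n) ℝ) (C' : Matrix (Fin n') (Fin n') ℝ)
    (hC : ∀ i k, C i k = ∑ s, (X i s - X k s) ^ 2)
    (hC' : ∀ j l, C' j l = ∑ s, (X' j s - X' l s) ^ 2)
    (w : Fin n → ℝ) (w' : Fin n' → ℝ)
    (hw : IsProbVec w) (hw' : IsProbVec w')
    (π : Matrix (Fin n) (Fin n') ℝ) (hπ : π ∈ TransportPolytope w w')
    (hopt : gwCost (fun a b => (a - b) ^ 2) C C' π
      = GW (fun a b => (a - b) ^ 2) C C' w w') :
    cootCost (fun a b => (a - b) ^ 2) C C' π π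
      = COOT (fun a b => (a - b) ^ 2) C C' w w' w w' := by
  have hgw0 : ∀ Q, Q ∈ TransportPolytope w w' →
      0 ≤ gwCost (fun a b => (a - b) ^ 2) C C' Q := by
    intro Q hQ
    show 0 ≤ ∑ i, ∑ j, ∑ k, ∑ l, (C i k - C' j l) ^ 2 * Q i j * Q k l
    exact Finset.sum_nonneg fun i _ => Finset.sum_nonneg fun j _ =>
      Finset.sum_nonneg fun k _ => Finset.sum_nonneg fun l _ =>
        mul_nonneg (mul_nonneg (sq_nonneg _) (hQ.1 i j)) (hQ.1 k l)
  have hcoot0 : ∀ A B, A ∈ TransportPolytope w w' → B ∈ TransportPolytope w w' →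
      0 ≤ cootCost (fun a b => (a - b) ^ 2) C C' A B := by
    intro A B hA hB
    show 0 ≤ ∑ i, ∑ j, ∑ k, ∑ l, (C i k - C' j l) ^ 2 * A i j * B k l
    exact Finset.sum_nonneg fun i _ => Finset.sum_nonneg fun j _ =>
      Finset.sum_nonneg fun k _ => Finset.sum_nonneg fun l _ =>
        mul_nonneg (mul_nonneg (sq_nonneg _) (hA.1 i j)) (hB.1 k l)
  have hSgne : Set.Nonempty {r | ∃ Q ∈ TransportPolytope w w',
      r = gwCost (fun a b => (a - b) ^ 2) C C' Q} :=
    ⟨gwCost (fun a b => (a - b) ^ 2) C C' π, π, hπ, rfl⟩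
  have hScne : Set.Nonempty {r | ∃ πs ∈ TransportPolytope w w',
      ∃ πv ∈ TransportPolytope w w',
      r = cootCost (fun a b => (a - b) ^ 2) C C' πs πv} :=
    ⟨cootCost (fun a b => (a - b) ^ 2) C C' π π, π, hπ, π, hπ, rfl⟩
  have hSgbdd : BddBelow {r | ∃ Q ∈ TransportPolytope w w',
      r = gwCost (fun a b => (a - b) ^ 2) C C' Q} := by
    refine ⟨0, fun r hr => ?_⟩
    obtain ⟨Q, hQ, rfl⟩ := hr
    exact hgw0 Q hQ
  have hScbdd : BddBelow {r | ∃ πs ∈ TransportPolytope w w',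
      ∃ πv ∈ TransportPolytope w w',
      r = cootCost (fun a b => (a - b) ^ 2) C C' πs πv} := by
    refine ⟨0, fun r hr => ?_⟩
    obtain ⟨A, hA, B, hB, rfl⟩ := hr
    exact hcoot0 A B hA hB
  have h1 : COOT (fun a b => (a - b) ^ 2) C C' w w' w w'
      ≤ GW (fun a b => (a - b) ^ 2) C C' w w' := by
    refine csInf_le_csInf hScbdd hSgne ?_
    rintro r ⟨Q, hQ, rfl⟩
    exact ⟨Q, hQ, Q, hQ, rfl⟩
  have h2 : GW (fun a b => (a - b) ^ 2) C C' w w'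
      ≤ COOT (fun a b => (a - b) ^ 2) C C' w w' w w' := by
    refine le_csInf hScne ?_
    rintro r ⟨A, hA, B, hB, rfl⟩
    have k1 : GW (fun a b => (a - b) ^ 2) C C' w w'
        ≤ gwCost (fun a b => (a - b) ^ 2) C C' A := csInf_le hSgbdd ⟨A, hA, rfl⟩
    have k2 : GW (fun a b => (a - b) ^ 2) C C' w w'
        ≤ gwCost (fun a b => (a - b) ^ 2) C C' B := csInf_le hSgbdd ⟨B, hB, rfl⟩
    have k3 := myKeyIneq X X' C C' hC hC' w w' A B hA hB
    linarith
  calc cootCost (fun a b => (a - b) ^ 2) C C' π π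
      = gwCost (fun a b => (a - b) ^ 2) C C' π := rfl
    _ = GW (fun a b => (a - b) ^ 2) C C' w w' := hopt
    _ = COOT (fun a b => (a - b) ^ 2) C C' w w' w w' := le_antisymm h2 h1
end

section
/- Let X ∈ ℝ^{n×p} and X' ∈ ℝ^{n'×p'} be matrices, let C = XXᵀ ∈ ℝ^{n×n} and C' = X'X'ᵀ ∈ ℝ^{n'×n'} be their Gram matrices, let L(a,b) = (a−b)², and let w ∈ ℝ^n, w' ∈ ℝ^{n'} be probability vectors. Then COOT(C, C', w, w', w, w') = GW(C, C', w, w'); moreover, if π* ∈ Π(w,w') attains the infimum defining GW(C,C',w,w') then (π*, π*) attains the infimum defining COOT(C,C',w,w',w,w'), and if (π^s, π^v) attains the infimum defining COOT(C,C',w,w',w,w') then both π^s and π^v attain the infimum defining GW(C,C',w,w'). -/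
open Finset Matrix

noncomputable def Mmap {n p n' p' : ℕ} (X : Matrix (Fin n) (Fin p) ℝ) (X' : Matrix (Fin n') (Fin p') ℝ)
    (π : Matrix (Fin n) (Fin n') ℝ) (a : Fin p) (b : Fin p') : ℝ :=
  ∑ i, ∑ j, X i a * π i j * X' j b

lemma collapse6 {α β γ δ ε ζ : Type} [Fintype α] [Fintype β] [Fintype γ] [Fintype δ]
    [Fintype ε] [Fintype ζ] (f : α → β → γ → δ → ε → ζ → ℝ) :
    ∑ i, ∑ j, ∑ k, ∑ l, ∑ a, ∑ b, f i j k l a b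
      = ∑ z : α × β × γ × δ × ε × ζ, f z.1 z.2.1 z.2.2.1 z.2.2.2.1 z.2.2.2.2.1 z.2.2.2.2.2 := by
  simp only [Fintype.sum_prod_type]

lemma cross_eq {n p n' p' : ℕ} (X : Matrix (Fin n) (Fin p) ℝ) (X' : Matrix (Fin n') (Fin p') ℝ)
    (πs πv : Matrix (Fin n) (Fin n') ℝ) :
    ∑ i, ∑ j, ∑ k, ∑ l, (X * X.transpose) i k * (X' * X'.transpose) j l * πs i j * πv k l
      = ∑ a, ∑ b, Mmap X X' πs a b * Mmap X X' πv a b := by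
  simp only [Mmap, Matrix.mul_apply, Matrix.transpose_apply, Finset.sum_mul, Finset.mul_sum]
  rw [collapse6, collapse6]
  apply Fintype.sum_bijective
    (fun z : (Fin n × Fin n' × Fin n × Fin n' × Fin p' × Fin p) =>
      ((z.2.2.2.2.2, z.2.2.2.2.1, z.2.2.1, z.2.2.2.1, z.1, z.2.1) :
        Fin p × Fin p' × Fin n × Fin n' × Fin n × Fin n'))
  · constructor
    · rintro ⟨i,j,k,l,a,b⟩ ⟨i',j',k',l',a',b'⟩ h
      simp_all [Prod.ext_iff]
    · rintro ⟨a,b,k,l,i,j⟩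
      exact ⟨(i,j,k,l,b,a), rfl⟩
  · rintro ⟨i,j,k,l,a,b⟩
    dsimp only
    ring

lemma term1_eq {n n' : ℕ} (C : Matrix (Fin n) (Fin n) ℝ) (w : Fin n → ℝ)
    (πs πv : Matrix (Fin n) (Fin n') ℝ)
    (hs : ∀ i, ∑ j, πs i j = w i) (hv : ∀ i, ∑ j, πv i j = w i) :
    ∑ i, ∑ j, ∑ k, ∑ l, (C i k)^2 * πs i j * πv k l = ∑ i, ∑ k, (C i k)^2 * w i * w k := by
  refine Finset.sum_congr rfl fun i _ => ?_
  rw [Finset.sum_comm]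
  refine Finset.sum_congr rfl fun k _ => ?_
  calc ∑ j, ∑ l, (C i k)^2 * πs i j * πv k l
      = ∑ j, (C i k)^2 * πs i j * ∑ l, πv k l := by
        refine Finset.sum_congr rfl fun j _ => ?_
        rw [Finset.mul_sum]
    _ = (∑ j, πs i j) * ((C i k)^2 * w k) := by
        rw [Finset.sum_mul]
        refine Finset.sum_congr rfl fun j _ => ?_
        rw [hv k]; ring
    _ = (C i k)^2 * w i * w k := by rw [hs i]; ring

lemma term2_eq {n n' : ℕ} (C' : Matrix (Fin n') (Fin n') ℝ) (w' : Fin n' → ℝ)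
    (πs πv : Matrix (Fin n) (Fin n') ℝ)
    (hs : ∀ j, ∑ i, πs i j = w' j) (hv : ∀ j, ∑ i, πv i j = w' j) :
    ∑ i, ∑ j, ∑ k, ∑ l, (C' j l)^2 * πs i j * πv k l = ∑ j, ∑ l, (C' j l)^2 * w' j * w' l := by
  rw [Finset.sum_comm]
  refine Finset.sum_congr rfl fun j _ => ?_
  calc ∑ i, ∑ k, ∑ l, (C' j l)^2 * πs i j * πv k l
      = ∑ i, ∑ l, ∑ k, (C' j l)^2 * πs i j * πv k l := by
        refine Finset.sum_congr rfl fun i _ => Finset.sum_comm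
    _ = ∑ l, ∑ i, ∑ k, (C' j l)^2 * πs i j * πv k l := Finset.sum_comm
    _ = ∑ l, (C' j l)^2 * w' j * w' l := by
        refine Finset.sum_congr rfl fun l _ => ?_
        calc ∑ i, ∑ k, (C' j l)^2 * πs i j * πv k l
            = ∑ i, πs i j * ((C' j l)^2 * w' l) := by
              refine Finset.sum_congr rfl fun i _ => ?_
              rw [← Finset.mul_sum]
              rw [hv l]; ring
          _ = (C' j l)^2 * w' j * w' l := by rw [← Finset.sum_mul, hs j]; ring

/-- The key expansion for the COOT objective with Gram matrices and squared loss. -/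
lemma coot_expand {n p n' p' : ℕ}
    (X : Matrix (Fin n) (Fin p) ℝ) (X' : Matrix (Fin n') (Fin p') ℝ)
    (w : Fin n → ℝ) (w' : Fin n' → ℝ)
    (πs πv : Matrix (Fin n) (Fin n') ℝ)
    (hs : πs ∈ TransportPolytope w w') (hv : πv ∈ TransportPolytope w w') :
    cootCost (fun a b => (a - b) ^ 2) (X * X.transpose) (X' * X'.transpose) πs πv
      = (∑ i, ∑ k, ((X * X.transpose) i k)^2 * w i * w k)
        + (∑ j, ∑ l, ((X' * X'.transpose) j l)^2 * w' j * w' l)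
        - 2 * ∑ a, ∑ b, Mmap X X' πs a b * Mmap X X' πv a b := by
  rw [← term1_eq (X * X.transpose) w πs πv hs.2.1 hv.2.1,
      ← term2_eq (X' * X'.transpose) w' πs πv hs.2.2 hv.2.2,
      ← cross_eq X X' πs πv]
  simp only [cootCost, Finset.mul_sum, ← Finset.sum_add_distrib, ← Finset.sum_sub_distrib]
  refine Finset.sum_congr rfl fun i _ => Finset.sum_congr rfl fun j _ =>
    Finset.sum_congr rfl fun k _ => Finset.sum_congr rfl fun l _ => by ring

lemma prod_mem_tp {n n' : ℕ} {w : Fin n → ℝ} {w' : Fin n' → ℝ}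
    (hw : IsProbVec w) (hw' : IsProbVec w') :
    (Matrix.of fun i j => w i * w' j) ∈ TransportPolytope w w' := by
  refine ⟨fun i j => mul_nonneg (hw.1 i) (hw'.1 j), fun i => ?_, fun j => ?_⟩
  · simp only [Matrix.of_apply, ← Finset.mul_sum, hw'.2, mul_one]
  · simp only [Matrix.of_apply, ← Finset.sum_mul, hw.2, one_mul]

lemma coot_nonneg {n n' : ℕ} {w : Fin n → ℝ} {w' : Fin n' → ℝ}
    (C : Matrix (Fin n) (Fin n) ℝ) (C' : Matrix (Fin n') (Fin n') ℝ)
    {πs πv : Matrix (Fin n) (Fin n') ℝ}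
    (hs : πs ∈ TransportPolytope w w') (hv : πv ∈ TransportPolytope w w') :
    0 ≤ cootCost (fun a b => (a - b) ^ 2) C C' πs πv := by
  refine Finset.sum_nonneg fun i _ => Finset.sum_nonneg fun j _ =>
    Finset.sum_nonneg fun k _ => Finset.sum_nonneg fun l _ => ?_
  exact mul_nonneg (mul_nonneg (sq_nonneg _) (hs.1 i j)) (hv.1 k l)

theorem coot_eq_gw_gram {n p n' p' : ℕ}
    (X : Matrix (Fin n) (Fin p) ℝ) (X' : Matrix (Fin n') (Fin p') ℝ)
    (w : Fin n → ℝ) (w' : Fin n' → ℝ)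
    (hw : IsProbVec w) (hw' : IsProbVec w') :
    COOT (fun a b => (a - b) ^ 2) (X * X.transpose) (X' * X'.transpose) w w' w w'
        = GW (fun a b => (a - b) ^ 2) (X * X.transpose) (X' * X'.transpose) w w' ∧
      (∀ π ∈ TransportPolytope w w',
        gwCost (fun a b => (a - b) ^ 2) (X * X.transpose) (X' * X'.transpose) π
            = GW (fun a b => (a - b) ^ 2) (X * X.transpose) (X' * X'.transpose) w w' →
          cootCost (fun a b => (a - b) ^ 2) (X * X.transpose) (X' * X'.transpose) π π
            = COOT (fun a b => (a - b) ^ 2) (X * X.transpose) (X' * X'.transpose)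
                w w' w w') ∧
      (∀ πs ∈ TransportPolytope w w', ∀ πv ∈ TransportPolytope w w',
        cootCost (fun a b => (a - b) ^ 2) (X * X.transpose) (X' * X'.transpose) πs πv
            = COOT (fun a b => (a - b) ^ 2) (X * X.transpose) (X' * X'.transpose)
                w w' w w' →
          gwCost (fun a b => (a - b) ^ 2) (X * X.transpose) (X' * X'.transpose) πs
              = GW (fun a b => (a - b) ^ 2) (X * X.transpose) (X' * X'.transpose) w w' ∧
            gwCost (fun a b => (a - b) ^ 2) (X * X.transpose) (X' * X'.transpose) πv
              = GW (fun a b => (a - b) ^ 2) (X * X.transpose) (X' * X'.transpose) w w') := by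
  set L : ℝ → ℝ → ℝ := fun a b => (a - b) ^ 2 with hLdef
  set C := X * X.transpose with hC
  set C' := X' * X'.transpose with hC'
  have hL : ∀ π : Matrix (Fin n) (Fin n') ℝ, gwCost L C C' π = cootCost L C C' π π :=
    fun π => rfl
  set SG : Set ℝ := {r | ∃ π ∈ TransportPolytope w w', r = gwCost L C C' π} with hSG
  set SC : Set ℝ := {r | ∃ πs ∈ TransportPolytope w w', ∃ πv ∈ TransportPolytope w w',
    r = cootCost L C C' πs πv} with hSC
  have hGW : GW L C C' w w' = sInf SG := rfl
  have hCO : COOT L C C' w w' w w' = sInf SC := rfl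
  have bddG : BddBelow SG := by
    refine ⟨0, ?_⟩
    rintro r ⟨π, hπ, rfl⟩
    exact coot_nonneg C C' hπ hπ
  have bddC : BddBelow SC := by
    refine ⟨0, ?_⟩
    rintro r ⟨πs, hs, πv, hv, rfl⟩
    exact coot_nonneg C C' hs hv
  have hmem := prod_mem_tp hw hw'
  have neG : SG.Nonempty := ⟨_, _, hmem, rfl⟩
  have neC : SC.Nonempty := ⟨_, _, hmem, _, hmem, rfl⟩
  have hsub : SG ⊆ SC := by
    rintro r ⟨π, hπ, rfl⟩
    exact ⟨π, hπ, π, hπ, rfl⟩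
  have hle : sInf SC ≤ sInf SG := csInf_le_csInf bddC neG hsub
  have key3 : ∀ πs ∈ TransportPolytope w w', ∀ πv ∈ TransportPolytope w w',
      gwCost L C C' πs + gwCost L C C' πv ≤ 2 * cootCost L C C' πs πv := by
    intro πs hs πv hv
    have e1 := coot_expand X X' w w' πs πs hs hs
    have e2 := coot_expand X X' w w' πv πv hv hv
    have e3 := coot_expand X X' w w' πs πv hs hv
    have hdiff : 0 ≤ ∑ a, ∑ b, (Mmap X X' πs a b - Mmap X X' πv a b) ^ 2 :=
      Finset.sum_nonneg fun a _ => Finset.sum_nonneg fun b _ => sq_nonneg _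
    have hexp : ∑ a, ∑ b, (Mmap X X' πs a b - Mmap X X' πv a b) ^ 2
        = (∑ a, ∑ b, Mmap X X' πs a b * Mmap X X' πs a b)
          + (∑ a, ∑ b, Mmap X X' πv a b * Mmap X X' πv a b)
          - 2 * ∑ a, ∑ b, Mmap X X' πs a b * Mmap X X' πv a b := by
      simp only [Finset.mul_sum, ← Finset.sum_add_distrib, ← Finset.sum_sub_distrib]
      exact Finset.sum_congr rfl fun a _ => Finset.sum_congr rfl fun b _ => by ring
    rw [hL πs, hL πv, e1, e2, e3]
    linarith
  have hge : sInf SG ≤ sInf SC := by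
    refine le_csInf neC ?_
    rintro r ⟨πs, hs, πv, hv, rfl⟩
    have h1 : sInf SG ≤ gwCost L C C' πs := csInf_le bddG ⟨πs, hs, rfl⟩
    have h2 : sInf SG ≤ gwCost L C C' πv := csInf_le bddG ⟨πv, hv, rfl⟩
    have h3 := key3 πs hs πv hv
    linarith
  have heq : COOT L C C' w w' w w' = GW L C C' w w' := by
    rw [hGW, hCO]; exact le_antisymm hle hge
  refine ⟨heq, ?_, ?_⟩
  · intro π hπ hopt
    calc cootCost L C C' π π = gwCost L C C' π := (hL π).symm
      _ = GW L C C' w w' := hopt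
      _ = COOT L C C' w w' w w' := heq.symm
  · intro πs hs πv hv hopt
    have h1 : sInf SG ≤ gwCost L C C' πs := csInf_le bddG ⟨πs, hs, rfl⟩
    have h2 : sInf SG ≤ gwCost L C C' πv := csInf_le bddG ⟨πv, hv, rfl⟩
    have h3 := key3 πs hs πv hv
    have h4 : cootCost L C C' πs πv = sInf SG := by
      rw [← hGW, ← heq, ← hopt]
    constructor <;> (rw [hGW]; linarith)
end
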